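/- Let $x_0, \ldots, x_n$ be pairwise distinct real numbers and $y_0, \ldots, y_m$ be pairwise distinct real numbers. Let $F = (f_{ij})$ and $\tilde{F} = (\tilde{f}_{ij})$ be real $(n+1)\times(m+1)$ matrices, and let $A = (a_{ij})$ and $\tilde{A} = (\tilde{a}_{ij})$ be the unique real $(n+1)\times(m+1)$ matrices satisfying the bivariate interpolation conditions $\sum_{k=0}^{n}\sum_{l=0}^{m} a_{kl}\, x_i^k y_j^l = f_{ij}$ and $\sum_{k=0}^{n}\sum_{l=0}^{m} \tilde{a}_{kl}\, x_i^k y_j^l = \tilde{f}_{ij}$ for all $0 \le i \le n$, $0 \le j \le m$. Set $\varepsilon = \max_{i,j} |f_{ij} - \tilde{f}_{ij}|$, $\lambda_x = \min_{i \ne j}|x_j - x_i|$, $\lambda_y = \min_{i \ne j}|y_j - y_i|$, $M_x = \max\{1, \max_j |x_j|\}$, and $M_y = \max\{1, \max_j |y_j|\}$. Then $\max_{i,j} |a_{ij} - \tilde{a}_{ij}| \le \dfrac{(m+1)(n+1) M_x^n M_y^m}{\lambda_x^n \lambda_y^m} \binom{n}{\lfloor n/2 \rfloor} \binom{m}{\lfloor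 m/2 \rfloor}\, \varepsilon$. -/

import Mathlib

open Finset

section AuxiliaryLemmas
open Polynomial

lemma coeff_prod_X_sub_C_abs_le {ι : Type*} [DecidableEq ι] (s : Finset ι) (r : ι → ℝ) (M : ℝ)
    (hM1 : 1 ≤ M) (hM : ∀ j ∈ s, |r j| ≤ M) (k : ℕ) :
    |(∏ j ∈ s, (X - C (r j))).coeff k| ≤ (s.card.choose k) * M ^ (s.card - k) := by
  have hM0 : (0:ℝ) ≤ M := le_trans zero_le_one hM1
  induction s using Finset.induction_on generalizing k with
  | empty =>
    simp only [prod_empty, card_empty, Nat.zero_sub, pow_zero, mul_one]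
    cases k with
    | zero => simp
    | succ k => simp [coeff_one]
  | @insert a s ha ih =>
    have hMs : ∀ j ∈ s, |r j| ≤ M := fun j hj => hM j (mem_insert_of_mem hj)
    have hMa : |r a| ≤ M := hM a (mem_insert_self a s)
    rw [prod_insert ha, mul_comm, card_insert_of_notMem ha]
    set p := ∏ j ∈ s, (X - C (r j)) with hp
    set c := s.card with hc
    cases k with
    | zero =>
      rw [mul_coeff_zero]
      have : (X - C (r a)).coeff 0 = -(r a) := by simp
      rw [this, abs_mul, abs_neg]
      have h1 := ih hMs 0
      calc |p.coeff 0| * |r a| ≤ (c.choose 0 * M ^ (c - 0)) * M := by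
            apply mul_le_mul h1 hMa (abs_nonneg _)
            positivity
        _ = (c+1).choose 0 * M ^ (c + 1 - 0) := by
            simp [pow_succ]
    | succ k =>
      rw [coeff_mul_X_sub_C]
      have h1 := ih hMs k
      have h2 := ih hMs (k+1)
      have key : (↑(c.choose (k+1)) * M ^ (c - (k+1))) * M ≤ ↑(c.choose (k+1)) * M ^ (c - k) := by
        by_cases hkc : k + 1 ≤ c
        · have h3 : M ^ (c - (k+1)) * M = M ^ (c - k) := by
            rw [← pow_succ]
            congr 1
            omega
          rw [mul_assoc, h3]
        · have h4 : c.choose (k+1) = 0 := Nat.choose_eq_zero_of_lt (by omega)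
          simp [h4]
      calc |p.coeff k - p.coeff (k+1) * r a| ≤ |p.coeff k| + |p.coeff (k+1)| * |r a| := by
            rw [← abs_mul]; exact abs_sub _ _
        _ ≤ c.choose k * M ^ (c - k) + (c.choose (k+1) * M ^ (c - (k+1))) * M := by
            apply add_le_add h1
            apply mul_le_mul h2 hMa (abs_nonneg _) (by positivity)
        _ ≤ c.choose k * M ^ (c - k) + c.choose (k+1) * M ^ (c - k) := by linarith
        _ = (c+1).choose (k+1) * M ^ (c + 1 - (k+1)) := by
            rw [Nat.succ_sub_succ, Nat.choose_succ_succ, ← add_mul]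
            push_cast
            ring

lemma lagrange_basis_eq_C_mul {ι : Type*} [DecidableEq ι] (s : Finset ι) (v : ι → ℝ) (i : ι) :
    Lagrange.basis s v i =
      C (∏ j ∈ s.erase i, (v i - v j)⁻¹) * ∏ j ∈ s.erase i, (X - C (v j)) := by
  rw [Lagrange.basis]
  simp_rw [Lagrange.basisDivisor]
  rw [prod_mul_distrib, ← map_prod]

lemma univar_coeff_bound (N : ℕ) (v : Fin (N+1) → ℝ) (hv : Function.Injective v)
    (lam M : ℝ)
    (hlam : IsLeast {d : ℝ | ∃ i j : Fin (N+1), i ≠ j ∧ d = |v j - v i|} lam)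
    (hM : M = max 1 (Finset.univ.sup' Finset.univ_nonempty fun i => |v i|))
    (i : Fin (N+1)) (k : ℕ) :
    |(Lagrange.basis Finset.univ v i).coeff k| ≤ N.choose (N/2) * M ^ N / lam ^ N := by
  have hM1 : (1:ℝ) ≤ M := hM ▸ le_max_left _ _
  have hM0 : (0:ℝ) ≤ M := le_trans zero_le_one hM1
  have hMv : ∀ j, |v j| ≤ M := by
    intro j
    rw [hM]
    exact le_trans (le_sup' (fun i => |v i|) (mem_univ j)) (le_max_right _ _)
  have hlam0 : 0 < lam := by
    obtain ⟨i0, j0, hij, hd⟩ := hlam.1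
    rw [hd, abs_pos, sub_ne_zero]
    exact fun h => hij (hv h).symm
  have hcard : (Finset.univ.erase i).card = N := by
    rw [card_erase_of_mem (mem_univ i), card_univ, Fintype.card_fin]
    omega
  have hlamle : ∀ j ∈ Finset.univ.erase i, lam ≤ |v i - v j| := by
    intro j hj
    exact hlam.2 ⟨j, i, (mem_erase.mp hj).1, rfl⟩
  rw [lagrange_basis_eq_C_mul, coeff_C_mul, abs_mul]
  have hinv : |∏ j ∈ Finset.univ.erase i, (v i - v j)⁻¹| ≤ (lam ^ N)⁻¹ := by
    calc |∏ j ∈ Finset.univ.erase i, (v i - v j)⁻¹|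
        = ∏ j ∈ Finset.univ.erase i, |(v i - v j)⁻¹| := Finset.abs_prod _ _
      _ ≤ ∏ _j ∈ Finset.univ.erase i, lam⁻¹ := by
          apply prod_le_prod (fun j hj => abs_nonneg _)
          intro j hj
          rw [abs_inv]
          exact inv_anti₀ hlam0 (hlamle j hj)
      _ = (lam ^ N)⁻¹ := by rw [prod_const, hcard, inv_pow]
  have hco : |(∏ j ∈ Finset.univ.erase i, (X - C (v j))).coeff k|
      ≤ N.choose (N/2) * M ^ N := by
    calc |(∏ j ∈ Finset.univ.erase i, (X - C (v j))).coeff k|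
        ≤ ((Finset.univ.erase i).card.choose k) * M ^ ((Finset.univ.erase i).card - k) :=
          coeff_prod_X_sub_C_abs_le _ _ M hM1 (fun j _ => hMv j) k
      _ = (N.choose k) * M ^ (N - k) := by rw [hcard]
      _ ≤ N.choose (N/2) * M ^ N := by
          apply mul_le_mul _ (pow_le_pow_right₀ hM1 (Nat.sub_le _ _)) (by positivity) (by positivity)
          exact_mod_cast Nat.choose_le_middle k N
  calc |∏ j ∈ Finset.univ.erase i, (v i - v j)⁻¹| *
        |(∏ j ∈ Finset.univ.erase i, (X - C (v j))).coeff k|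
      ≤ (lam ^ N)⁻¹ * (N.choose (N/2) * M ^ N) := by
        apply mul_le_mul hinv hco (abs_nonneg _) (by positivity)
    _ = N.choose (N/2) * M ^ N / lam ^ N := by ring

lemma univar_orth (N : ℕ) (v : Fin (N+1) → ℝ) (hv : Function.Injective v)
    (k k' : Fin (N+1)) :
    ∑ i : Fin (N+1), (Lagrange.basis Finset.univ v i).coeff k * v i ^ (k' : ℕ)
      = if k = k' then 1 else 0 := by
  have hinj : Set.InjOn v ↑(Finset.univ : Finset (Fin (N+1))) := fun a _ b _ h => hv h
  set W : Matrix (Fin (N+1)) (Fin (N+1)) ℝ :=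
    fun k i => (Lagrange.basis Finset.univ v i).coeff k with hW
  have hVW : Matrix.vandermonde v * W = 1 := by
    ext i i'
    rw [Matrix.mul_apply, Matrix.one_apply]
    have hdeg : (Lagrange.basis Finset.univ v i').natDegree < N + 1 := by
      rw [Lagrange.natDegree_basis hinj (mem_univ i'), card_univ, Fintype.card_fin]
      omega
    have heval : (Lagrange.basis Finset.univ v i').eval (v i)
        = ∑ j : Fin (N+1), (Lagrange.basis Finset.univ v i').coeff j * v i ^ (j:ℕ) := by
      rw [eval_eq_sum_range' hdeg, Fin.sum_univ_eq_sum_range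
        (fun j => (Lagrange.basis Finset.univ v i').coeff j * v i ^ j)]
    rw [show ∑ j : Fin (N+1), Matrix.vandermonde v i j * W j i'
        = ∑ j : Fin (N+1), (Lagrange.basis Finset.univ v i').coeff j * v i ^ (j:ℕ) by
      apply Finset.sum_congr rfl; intro j _; simp only [Matrix.vandermonde, Matrix.of_apply, hW]; ring]
    rw [← heval]
    by_cases h : i = i'
    · subst h; rw [Lagrange.eval_basis_self hinj (mem_univ i), if_pos rfl]
    · rw [Lagrange.eval_basis_of_ne (Ne.symm h) (mem_univ i), if_neg h]
  have hWV : W * Matrix.vandermonde v = 1 := mul_eq_one_comm.mp hVW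
  have := congrFun (congrFun hWV k) k'
  rw [Matrix.mul_apply] at this
  rw [show (1 : Matrix (Fin (N+1)) (Fin (N+1)) ℝ) k k' = if k = k' then 1 else 0 from
    Matrix.one_apply] at this
  rw [← this]
  apply Finset.sum_congr rfl
  intro j _
  simp only [Matrix.vandermonde, Matrix.of_apply, hW]
end AuxiliaryLemmas

open Matrix Polynomial in
/-- **Error estimate for bivariate interpolation (Theorem 9).**
If `A` and `Ã` solve the bivariate interpolation systems for data `F` and `F̃` on
the grid `(xᵢ, yⱼ)` with pairwise distinct `xᵢ` and pairwise distinct `yⱼ`, and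
`ε = max_{i,j} |F_{ij} - F̃_{ij}|`, `λₓ = min_{i≠j}|x_j - x_i|`,
`λ_y = min_{i≠j}|y_j - y_i|`, `Mₓ = max {1, max |xᵢ|}`, `M_y = max {1, max |yⱼ|}`,
then `max_{i,j} |a_{ij} - ã_{ij}| ≤
((m+1)(n+1) Mₓⁿ M_yᵐ / (λₓⁿ λ_yᵐ)) C(n,⌊n/2⌋) C(m,⌊m/2⌋) ε`. -/
theorem bivariate_interpolation_coefficient_error
    (n m : ℕ)
    (x : Fin (n + 1) → ℝ) (hx : Function.Injective x)
    (y : Fin (m + 1) → ℝ) (hy : Function.Injective y)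
    (F Ftilde A Atilde : Matrix (Fin (n + 1)) (Fin (m + 1)) ℝ)
    (hA : ∀ i j, ∑ k : Fin (n + 1), ∑ l : Fin (m + 1),
      A k l * x i ^ (k : ℕ) * y j ^ (l : ℕ) = F i j)
    (hAtilde : ∀ i j, ∑ k : Fin (n + 1), ∑ l : Fin (m + 1),
      Atilde k l * x i ^ (k : ℕ) * y j ^ (l : ℕ) = Ftilde i j)
    (ε lamx lamy Mx My : ℝ)
    (hε : ε = Finset.univ.sup' Finset.univ_nonempty
      (fun p : Fin (n + 1) × Fin (m + 1) => |F p.1 p.2 - Ftilde p.1 p.2|))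
    (hlamx : IsLeast {d : ℝ | ∃ i j : Fin (n + 1), i ≠ j ∧ d = |x j - x i|} lamx)
    (hlamy : IsLeast {d : ℝ | ∃ i j : Fin (m + 1), i ≠ j ∧ d = |y j - y i|} lamy)
    (hMx : Mx = max 1 (Finset.univ.sup' Finset.univ_nonempty (fun i => |x i|)))
    (hMy : My = max 1 (Finset.univ.sup' Finset.univ_nonempty (fun j => |y j|))) :
    ∀ i : Fin (n + 1), ∀ j : Fin (m + 1),
      |A i j - Atilde i j| ≤
        (m + 1) * (n + 1) * Mx ^ n * My ^ m / (lamx ^ n * lamy ^ m) *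
          (n.choose (n / 2)) * (m.choose (m / 2)) * ε := by
  intro k l
  -- basic positivity facts
  have hlamx0 : 0 < lamx := by
    obtain ⟨i0, j0, hij, hd⟩ := hlamx.1
    rw [hd, abs_pos, sub_ne_zero]
    exact fun h => hij (hx h).symm
  have hlamy0 : 0 < lamy := by
    obtain ⟨i0, j0, hij, hd⟩ := hlamy.1
    rw [hd, abs_pos, sub_ne_zero]
    exact fun h => hij (hy h).symm
  have hMx1 : (1:ℝ) ≤ Mx := hMx ▸ le_max_left _ _
  have hMy1 : (1:ℝ) ≤ My := hMy ▸ le_max_left _ _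
  have hMx0 : (0:ℝ) ≤ Mx := le_trans zero_le_one hMx1
  have hMy0 : (0:ℝ) ≤ My := le_trans zero_le_one hMy1
  have hε0 : 0 ≤ ε := by
    have := Finset.le_sup' (fun p : Fin (n + 1) × Fin (m + 1) => |F p.1 p.2 - Ftilde p.1 p.2|)
      (Finset.mem_univ (k, l))
    rw [← hε] at this
    exact le_trans (abs_nonneg _) this
  have hεb : ∀ i j, |F i j - Ftilde i j| ≤ ε := by
    intro i j
    have := Finset.le_sup' (fun p : Fin (n + 1) × Fin (m + 1) => |F p.1 p.2 - Ftilde p.1 p.2|)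
      (Finset.mem_univ (i, j))
    rw [← hε] at this
    exact this
  -- inverse matrices
  set Wx : Matrix (Fin (n+1)) (Fin (n+1)) ℝ :=
    fun k i => (Lagrange.basis Finset.univ x i).coeff (k : ℕ) with hWx
  set Wy : Matrix (Fin (m+1)) (Fin (m+1)) ℝ :=
    fun l j => (Lagrange.basis Finset.univ y j).coeff (l : ℕ) with hWy
  have hWVx : Wx * Matrix.vandermonde x = 1 := by
    ext a b
    rw [Matrix.mul_apply, Matrix.one_apply, ← univar_orth n x hx a b]
    apply Finset.sum_congr rfl
    intro j _
    simp only [Matrix.vandermonde, Matrix.of_apply, hWx]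
  have hWVy : Wy * Matrix.vandermonde y = 1 := by
    ext a b
    rw [Matrix.mul_apply, Matrix.one_apply, ← univar_orth m y hy a b]
    apply Finset.sum_congr rfl
    intro j _
    simp only [Matrix.vandermonde, Matrix.of_apply, hWy]
  -- interpolation conditions in matrix form
  have hFmat : ∀ (B G : Matrix (Fin (n+1)) (Fin (m+1)) ℝ),
      (∀ i j, ∑ k : Fin (n + 1), ∑ l : Fin (m + 1),
        B k l * x i ^ (k : ℕ) * y j ^ (l : ℕ) = G i j) →
      Matrix.vandermonde x * B * (Matrix.vandermonde y)ᵀ = G := by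
    intro B G hBG
    ext i j
    have h := hBG i j
    rw [Finset.sum_comm] at h
    simp only [Matrix.mul_apply, Matrix.transpose_apply, Matrix.vandermonde, Matrix.of_apply]
    rw [← h]
    apply Finset.sum_congr rfl
    intro l _
    rw [Finset.sum_mul]
    apply Finset.sum_congr rfl
    intro k' _
    ring
  have hrec : ∀ (B G : Matrix (Fin (n+1)) (Fin (m+1)) ℝ),
      Matrix.vandermonde x * B * (Matrix.vandermonde y)ᵀ = G →
      B = Wx * G * Wyᵀ := by
    intro B G hG
    rw [← hG]
    calc B = (Wx * Matrix.vandermonde x) * B * ((Matrix.vandermonde y)ᵀ * Wyᵀ) := by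
          rw [← Matrix.transpose_mul, hWVy, hWVx, Matrix.transpose_one, Matrix.one_mul,
            Matrix.mul_one]
      _ = Wx * (Matrix.vandermonde x * B * (Matrix.vandermonde y)ᵀ) * Wyᵀ := by
          simp only [Matrix.mul_assoc]
  have hArep := hrec A F (hFmat A F hA)
  have hAtrep := hrec Atilde Ftilde (hFmat Atilde Ftilde hAtilde)
  have hDrep : A - Atilde = Wx * (F - Ftilde) * Wyᵀ := by
    rw [Matrix.mul_sub, Matrix.sub_mul, ← hArep, ← hAtrep]
  -- coefficient bounds
  set Bx : ℝ := n.choose (n/2) * Mx ^ n / lamx ^ n with hBxdef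
  set By : ℝ := m.choose (m/2) * My ^ m / lamy ^ m with hBydef
  have hBx : ∀ (i : Fin (n+1)) (a : Fin (n+1)), |Wx a i| ≤ Bx := fun i a =>
    univar_coeff_bound n x hx lamx Mx hlamx hMx i a
  have hBy : ∀ (j : Fin (m+1)) (a : Fin (m+1)), |Wy a j| ≤ By := fun j a =>
    univar_coeff_bound m y hy lamy My hlamy hMy j a
  have hBx0 : 0 ≤ Bx := le_trans (abs_nonneg _) (hBx k k)
  have hBy0 : 0 ≤ By := le_trans (abs_nonneg _) (hBy l l)
  -- the entrywise bound
  have hentry : (A - Atilde) k l = ∑ j, (∑ i, Wx k i * (F - Ftilde) i j) * Wy l j := by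
    rw [hDrep, Matrix.mul_apply]
    apply Finset.sum_congr rfl
    intro j _
    rw [Matrix.mul_apply, Matrix.transpose_apply]
  have hmain : |(A - Atilde) k l| ≤ (m+1 : ℝ) * ((n+1 : ℝ) * (Bx * ε) * By) := by
    rw [hentry]
    calc |∑ j, (∑ i, Wx k i * (F - Ftilde) i j) * Wy l j|
        ≤ ∑ j, |(∑ i, Wx k i * (F - Ftilde) i j) * Wy l j| :=
          Finset.abs_sum_le_sum_abs _ _
      _ ≤ ∑ _j : Fin (m+1), (n+1 : ℝ) * (Bx * ε) * By := by
          apply Finset.sum_le_sum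
          intro j _
          rw [abs_mul]
          apply mul_le_mul _ (hBy j l) (abs_nonneg _) (by positivity)
          calc |∑ i, Wx k i * (F - Ftilde) i j|
              ≤ ∑ i, |Wx k i * (F - Ftilde) i j| := Finset.abs_sum_le_sum_abs _ _
            _ ≤ ∑ _i : Fin (n+1), Bx * ε := by
                apply Finset.sum_le_sum
                intro i _
                rw [abs_mul]
                apply mul_le_mul (hBx i k) _ (abs_nonneg _) hBx0
                simpa using hεb i j
            _ = (n+1 : ℝ) * (Bx * ε) := by
                rw [Finset.sum_const, Finset.card_univ, Fintype.card_fin, nsmul_eq_mul]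
                push_cast
                ring
      _ = (m+1 : ℝ) * ((n+1 : ℝ) * (Bx * ε) * By) := by
          rw [Finset.sum_const, Finset.card_univ, Fintype.card_fin, nsmul_eq_mul]
          push_cast
          ring
  have hfinal : (m+1 : ℝ) * ((n+1 : ℝ) * (Bx * ε) * By)
      = (m + 1) * (n + 1) * Mx ^ n * My ^ m / (lamx ^ n * lamy ^ m) *
          (n.choose (n / 2)) * (m.choose (m / 2)) * ε := by
    rw [hBxdef, hBydef]
    field_simp
  have : (A - Atilde) k l = A k l - Atilde k l := by simp [Matrix.sub_apply]
  rw [← this]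
  rw [← hfinal]
  exact hmain
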